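/- Fix n ∈ ℕ and set σ = (n+1)(n+2). For every m > n, the real symmetric matrix with rows and columns indexed by i, j ∈ {n+1, …, m} and entries (D − σM)(i,j) — that is, the trailing finite section of D − σM obtained by deleting the first n+1 rows and columns — is positive definite. -/

import Mathlib

/-!
Gershgorin: every eigenvalue of the symmetric section lies within `σ ∑_{q ≠ p} |M(p,q)|` of a
diagonal entry `(p+1)(p+2) - σ M(p,p)` with `p > n`. Since `σ < (p+1)(p+2)`, it suffices that
the absolute row sums of `M` are at most `1` for `p ≥ 1`. By AM-GM,
`|M(p,p+2)| = √(f(p) f(p+1)) ≤ (f(p) + f(p+1))/2` with `f(t) = (t+1)(t+3)/((2t+3)(2t+5))`, and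
`M(p,p) + (f(p-2) + f(p-1))/2 + (f(p) + f(p+1))/2 = 1 - 18/((2p-1)(2p+1)(2p+5)(2p+7))`.
-/

/-- The diagonal stiffness matrix `D` with `D(n,n) = (n+1)(n+2)`. -/
noncomputable def Dmat (i j : ℕ) : ℝ :=
  if i = j then ((i : ℝ) + 1) * ((i : ℝ) + 2) else 0

/-- The symmetric pentadiagonal mass matrix `M` with
`M(n,n) = 2(n+1)(n+2)/((2n+1)(2n+5))` and
`M(n,n+2) = M(n+2,n) = -√((n+1)(n+2)(n+3)(n+4)/((2n+3)(2n+5)²(2n+7)))`. -/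
noncomputable def Mmat (i j : ℕ) : ℝ :=
  if i = j then 2 * ((i : ℝ) + 1) * ((i : ℝ) + 2) / ((2 * (i : ℝ) + 1) * (2 * (i : ℝ) + 5))
  else if i + 2 = j then
    -Real.sqrt (((i : ℝ) + 1) * ((i : ℝ) + 2) * ((i : ℝ) + 3) * ((i : ℝ) + 4) /
      ((2 * (i : ℝ) + 3) * (2 * (i : ℝ) + 5) ^ 2 * (2 * (i : ℝ) + 7)))
  else if j + 2 = i then
    -Real.sqrt (((j : ℝ) + 1) * ((j : ℝ) + 2) * ((j : ℝ) + 3) * ((j : ℝ) + 4) /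
      ((2 * (j : ℝ) + 3) * (2 * (j : ℝ) + 5) ^ 2 * (2 * (j : ℝ) + 7)))
  else 0

open Finset

open scoped ComplexOrder in
theorem Matrix.IsHermitian.posDef_of_sum_norm_lt_re_diag {𝕜 ι : Type*} [RCLike 𝕜] [Fintype ι]
    [DecidableEq ι] {A : Matrix ι ι 𝕜} (hA : A.IsHermitian)
    (hdom : ∀ k, ∑ j ∈ univ.erase k, ‖A k j‖ < RCLike.re (A k k)) : A.PosDef := by
  refine hA.posDef_iff_eigenvalues_pos.mpr fun i => ?_
  have hμ : Module.End.HasEigenvalue (Matrix.toLin' A) (hA.eigenvalues i : 𝕜) := by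
    rw [Module.End.hasEigenvalue_iff_mem_spectrum, Matrix.spectrum_toLin']
    exact spectrum.algebraMap_mem 𝕜 (hA.eigenvalues_mem_spectrum_real i)
  obtain ⟨k, hk⟩ := eigenvalue_mem_ball hμ
  rw [Metric.mem_closedBall, dist_eq_norm, norm_sub_rev] at hk
  have hre := (RCLike.re_le_norm (A k k - hA.eigenvalues i)).trans hk
  simp only [map_sub, RCLike.ofReal_re] at hre
  linarith [hdom k]

noncomputable def massDiag (t : ℝ) : ℝ := 2 * (t + 1) * (t + 2) / ((2 * t + 1) * (2 * t + 5))

noncomputable def massOffDiag (t : ℝ) : ℝ :=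
  √((t + 1) * (t + 2) * (t + 3) * (t + 4) / ((2 * t + 3) * (2 * t + 5) ^ 2 * (2 * t + 7)))

noncomputable def massFactor (t : ℝ) : ℝ := (t + 1) * (t + 3) / ((2 * t + 3) * (2 * t + 5))

lemma massOffDiag_nonneg (t : ℝ) : 0 ≤ massOffDiag t := Real.sqrt_nonneg _

lemma massFactor_nonneg {t : ℝ} (ht : -1 ≤ t) : 0 ≤ massFactor t := by
  unfold massFactor
  apply div_nonneg <;> nlinarith

lemma massOffDiag_le {t : ℝ} (ht : -1 ≤ t) :
    massOffDiag t ≤ (massFactor t + massFactor (t + 1)) / 2 := by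
  have hf₀ := massFactor_nonneg ht
  have hf₁ := massFactor_nonneg (t := t + 1) (by linarith)
  have hradicand : (t + 1) * (t + 2) * (t + 3) * (t + 4) /
      ((2 * t + 3) * (2 * t + 5) ^ 2 * (2 * t + 7)) = massFactor t * massFactor (t + 1) := by
    unfold massFactor
    rw [div_mul_div_comm]
    ring
  rw [massOffDiag, hradicand, Real.sqrt_le_left (by positivity)]
  nlinarith [sq_nonneg (massFactor t - massFactor (t + 1))]

lemma massOffDiag_sub_two_add_massDiag_add_massOffDiag_le_one {t : ℝ} (ht : 1 ≤ t) :
    massOffDiag (t - 2) + massDiag t + massOffDiag t ≤ 1 := by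
  have hbelow := massOffDiag_le (t := t - 2) (by linarith)
  have habove := massOffDiag_le (t := t) (by linarith)
  have hsum : (massFactor (t - 2) + massFactor (t - 2 + 1)) / 2 + massDiag t +
      (massFactor t + massFactor (t + 1)) / 2 =
        1 - 18 / ((2 * t - 1) * (2 * t + 1) * (2 * t + 5) * (2 * t + 7)) := by
    have : t * 2 - 1 ≠ 0 := by linarith
    unfold massFactor massDiag
    rw [show 2 * (t - 2) + 3 = 2 * t - 1 by ring, show 2 * (t - 2) + 5 = 2 * t + 1 by ring,
      show 2 * (t - 2 + 1) + 3 = 2 * t + 1 by ring, show 2 * (t - 2 + 1) + 5 = 2 * t + 3 by ring,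
      show 2 * (t + 1) + 3 = 2 * t + 5 by ring, show 2 * (t + 1) + 5 = 2 * t + 7 by ring]
    field_simp
    ring
  have : 0 < 18 / ((2 * t - 1) * (2 * t + 1) * (2 * t + 5) * (2 * t + 7)) := by
    have : 0 < 2 * t - 1 := by linarith
    positivity
  linarith

lemma Dmat_comm (i j : ℕ) : Dmat i j = Dmat j i := by
  rcases eq_or_ne i j with rfl | h
  · rfl
  · simp [Dmat, h, h.symm]

lemma Mmat_comm (i j : ℕ) : Mmat i j = Mmat j i := by
  rcases eq_or_ne i j with rfl | h
  · rfl
  · unfold Mmat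
    rw [if_neg h, if_neg h.symm]
    split_ifs <;> first | rfl | omega

lemma Mmat_self (p : ℕ) : Mmat p p = massDiag p := by simp [Mmat, massDiag]

lemma Mmat_add_two (p : ℕ) : Mmat p (p + 2) = -massOffDiag p := by simp [Mmat, massOffDiag]

lemma Mmat_eq_zero {p q : ℕ} (h : q ≠ p) (hup : q ≠ p + 2) (hdown : q + 2 ≠ p) : Mmat p q = 0 := by
  unfold Mmat
  split_ifs <;> first | rfl | omega

lemma abs_Mmat_sub_two_le {p : ℕ} (hp : 1 ≤ p) : |Mmat p (p - 2)| ≤ massOffDiag (p - 2) := by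
  rcases Nat.lt_or_ge p 2 with hp2 | hp2
  · obtain rfl : p = 1 := by omega
    simpa [Mmat] using massOffDiag_nonneg _
  · obtain ⟨q, rfl⟩ := Nat.exists_eq_add_of_le' hp2
    rw [Nat.add_sub_cancel, Mmat_comm, Mmat_add_two, abs_neg, abs_of_nonneg (massOffDiag_nonneg _),
      show ((q + 2 : ℕ) : ℝ) - 2 = q by push_cast; ring]

-- This fails for `p = 0`, where the row sum is `4/5 + √(8/175) > 1`.
lemma sum_abs_Mmat_le_one {p : ℕ} (hp : 1 ≤ p) (s : Finset ℕ) : ∑ q ∈ s, |Mmat p q| ≤ 1 := by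
  calc ∑ q ∈ s, |Mmat p q|
      ≤ ∑ q ∈ {p - 2, p, p + 2}, |Mmat p q| := by
        rw [← sum_filter_ne_zero]
        refine sum_le_sum_of_subset_of_nonneg (fun q hq => ?_) fun _ _ _ => abs_nonneg _
        have hq : Mmat p q ≠ 0 := by simpa using (mem_filter.mp hq).2
        contrapose! hq
        simp only [mem_insert, mem_singleton, not_or] at hq
        exact Mmat_eq_zero hq.2.1 hq.2.2 (by omega)
    _ = |Mmat p (p - 2)| + |Mmat p p| + |Mmat p (p + 2)| := by
        rw [sum_insert (by simp; omega), sum_pair (by omega), add_assoc]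
    _ ≤ massOffDiag (p - 2) + massDiag p + massOffDiag p := by
        rw [Mmat_self, Mmat_add_two, abs_neg, abs_of_nonneg (massOffDiag_nonneg _),
          abs_of_nonneg (a := massDiag p) (by unfold massDiag; positivity)]
        gcongr
        exact abs_Mmat_sub_two_le hp
    _ ≤ 1 := massOffDiag_sub_two_add_massDiag_add_massOffDiag_le_one (by exact_mod_cast hp)

lemma sum_erase_abs_Dmat_sub_mul_Mmat_lt {ι : Type*} [Fintype ι] [DecidableEq ι] {g : ι → ℕ}
    (hg : Function.Injective g) {σ : ℝ} (hσ : 0 ≤ σ) {i : ι} (hi : 1 ≤ g i)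
    (hσi : σ < ((g i : ℝ) + 1) * ((g i : ℝ) + 2)) :
    ∑ j ∈ univ.erase i, |Dmat (g i) (g j) - σ * Mmat (g i) (g j)| <
      Dmat (g i) (g i) - σ * Mmat (g i) (g i) := by
  have hoff : ∑ j ∈ univ.erase i, |Dmat (g i) (g j) - σ * Mmat (g i) (g j)| =
      σ * ∑ j ∈ univ.erase i, |Mmat (g i) (g j)| := by
    rw [mul_sum]
    refine sum_congr rfl fun j hj => ?_
    rw [Dmat, if_neg (hg.ne (ne_of_mem_erase hj).symm), zero_sub, abs_neg, abs_mul,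
      abs_of_nonneg hσ]
  have hrow : |Mmat (g i) (g i)| + ∑ j ∈ univ.erase i, |Mmat (g i) (g j)| ≤ 1 := by
    rw [add_sum_erase _ (fun j => |Mmat (g i) (g j)|) (mem_univ i),
      ← sum_image (f := fun q => |Mmat (g i) q|) hg.injOn]
    exact sum_abs_Mmat_le_one hi _
  rw [hoff, Dmat, if_pos rfl]
  nlinarith [le_abs_self (Mmat (g i) (g i))]

theorem trailing_section_posDef_general (n m : ℕ) :
    Matrix.PosDef
      (Matrix.of fun i j : Fin (m - n) =>
        Dmat (n + 1 + (i : ℕ)) (n + 1 + (j : ℕ)) -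
          (((n : ℝ) + 1) * ((n : ℝ) + 2)) * Mmat (n + 1 + (i : ℕ)) (n + 1 + (j : ℕ))) := by
  have hg : Function.Injective fun i : Fin (m - n) => n + 1 + (i : ℕ) :=
    fun i j h => Fin.ext (by simpa using h)
  refine Matrix.IsHermitian.posDef_of_sum_norm_lt_re_diag ?_ fun i => ?_
  · ext i j
    simp [Dmat_comm, Mmat_comm]
  · have hσ : ((n : ℝ) + 1) * ((n : ℝ) + 2) <
        (((n + 1 + i : ℕ) : ℝ) + 1) * (((n + 1 + i : ℕ) : ℝ) + 2) := by
      push_cast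
      nlinarith [(i : ℕ).cast_nonneg (α := ℝ)]
    simpa using sum_erase_abs_Dmat_sub_mul_Mmat_lt hg (by positivity) (by omega) hσ

theorem trailing_section_posDef (n m : ℕ) (hm : n < m) :
    Matrix.PosDef
      (Matrix.of fun i j : Fin (m - n) =>
        Dmat (n + 1 + (i : ℕ)) (n + 1 + (j : ℕ)) -
          (((n : ℝ) + 1) * ((n : ℝ) + 2)) * Mmat (n + 1 + (i : ℕ)) (n + 1 + (j : ℕ))) :=
  trailing_section_posDef_general n m
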